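/- For every real q>1, every n≥1, every m≥1 and every x∈[0,∞), the moments admit the explicit representation M_{n,q}(t^m;x) = ∑_{j=1}^{m} S_q(m,j) x^j/[n]_q^{m−j}, where S_q are the q-Stirling-type numbers defined by the recurrence below. In particular, M_{n,q}(t^m;x) is a polynomial in x of degree m without a constant term. -/

import Mathlib

open scoped BigOperators

/-- The `q`-integer `[k]_q = (q^k - 1)/(q - 1)`. -/
noncomputable def qNat (q : ℝ) (k : ℕ) : ℝ := (q ^ k - 1) / (q - 1)

/-- The `q`-factorial `[k]_q! = [1]_q [2]_q ⋯ [k]_q`, with `[0]_q! = 1`. -/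
noncomputable def qFactorial (q : ℝ) : ℕ → ℝ
  | 0 => 1
  | k + 1 => qFactorial q k * qNat q (k + 1)

/-- The `q`-exponential function `e_q(z) = ∑_{k=0}^∞ z^k/[k]_q!`. -/
noncomputable def qExp (q z : ℝ) : ℝ := ∑' k : ℕ, z ^ k / qFactorial q k

/-- The `q`-Szász basis function
`s_{n,k}(q;x) = q^{-k(k-1)/2} ([n]_q^k x^k/[k]_q!) e_q(-[n]_q q^{-k} x)`. -/
noncomputable def qSzaszBasis (q : ℝ) (n k : ℕ) (x : ℝ) : ℝ :=
  (q ^ (k * (k - 1) / 2))⁻¹ * (qNat q n ^ k * x ^ k / qFactorial q k) *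
    qExp q (-(qNat q n) * q ^ (-(k : ℤ)) * x)

/-- The `q`-Szász operator `M_{n,q}(f;x) = ∑_{k=0}^∞ f([k]_q/[n]_q) s_{n,k}(q;x)`. -/
noncomputable def qSzasz (q : ℝ) (n : ℕ) (f : ℝ → ℝ) (x : ℝ) : ℝ :=
  ∑' k : ℕ, f (qNat q k / qNat q n) * qSzaszBasis q n k x

/-- The weight `w_0(x) = 1`, `w_p(x) = (1 + x^p)⁻¹` for `p ≥ 1`. -/
noncomputable def weight (p : ℕ) (x : ℝ) : ℝ := if p = 0 then 1 else (1 + x ^ p)⁻¹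

/-- The weighted sup-norm `‖f‖_p = sup_{x ≥ 0} w_p(x)|f(x)|`. -/
noncomputable def wnorm (p : ℕ) (f : ℝ → ℝ) : ℝ :=
  ⨆ x : Set.Ici (0 : ℝ), weight p x.1 * |f x.1|

/-- Membership in the space `C_p`: `f` is continuous on `[0,∞)` and `w_p f` is
uniformly continuous and bounded on `[0,∞)`. -/
def MemCp (p : ℕ) (f : ℝ → ℝ) : Prop :=
  ContinuousOn f (Set.Ici 0) ∧
  UniformContinuousOn (fun x => weight p x * f x) (Set.Ici 0) ∧
  ∃ M : ℝ, ∀ x ∈ Set.Ici (0 : ℝ), |weight p x * f x| ≤ M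

/-- The second difference `Δ_h² f(x) = f(x+2h) - 2f(x+h) + f(x)`. -/
noncomputable def delta2 (f : ℝ → ℝ) (h x : ℝ) : ℝ := f (x + 2 * h) - 2 * f (x + h) + f x

/-- The second modulus of smoothness `ω_p²(f;δ) = sup_{0<h≤δ} ‖Δ_h² f‖_p`. -/
noncomputable def omega2 (p : ℕ) (f : ℝ → ℝ) (δ : ℝ) : ℝ :=
  ⨆ h : {h : ℝ // 0 < h ∧ h ≤ δ}, wnorm p (fun x => delta2 f h.1 x)

/-- The (first) modulus of continuity on `[0,∞)`:
`ω(g;δ) = sup {|g(s)-g(t)| : s,t ≥ 0, |s-t| ≤ δ}`. -/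
noncomputable def omega1 (g : ℝ → ℝ) (δ : ℝ) : ℝ :=
  sSup {d : ℝ | ∃ s t : ℝ, 0 ≤ s ∧ 0 ≤ t ∧ |s - t| ≤ δ ∧ d = |g s - g t|}

/-- The `q`-derivative `(D_q g)(x) = (g(qx) - g(x))/((q-1)x)`. -/
noncomputable def qDeriv (q : ℝ) (g : ℝ → ℝ) (x : ℝ) : ℝ := (g (q * x) - g x) / ((q - 1) * x)

/-- The `q`-Stirling-type numbers: `S_q(0,0)=1`, `S_q(m,0)=0` for `m>0`,
`S_q(m,j)=0` for `m<j`, and `S_q(m+1,j)=[j]_q S_q(m,j) + S_q(m,j-1)`. -/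
noncomputable def qStirling (q : ℝ) : ℕ → ℕ → ℝ
  | 0, 0 => 1
  | 0, _ + 1 => 0
  | _ + 1, 0 => 0
  | m + 1, j + 1 => qNat q (j + 1) * qStirling q m (j + 1) + qStirling q m j

/-!
Put `y = [n]_q x`. Expanding the `q`-exponential in `s_{n,k}(q;x)` gives a double series in `y`
that converges absolutely because `[k]_q! ≥ k!` for `q > 1`. Collecting powers of `y`, the
coefficient of `y^N` in `∑_k [k]_q^m s_{n,k}(q;x)` is
`∑_{k+j=N} (-1)^j [k]_q^m / (q^{C(k,2)+kj} [k]_q! [j]_q!)`, and the splitting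
`[k+j]_q = [k]_q + q^k [j]_q` shows that these coefficients obey the recurrence of `S_q(m,N)`.
-/

open Finset Nat

theorem Summable.tsum_tsum_eq_tsum_sum_antidiagonal {A E : Type*} [AddCommMonoid A]
    [HasAntidiagonal A] [NormedAddCommGroup E] [CompleteSpace E] {f : A × A → E}
    (hf : Summable f) : ∑' k, ∑' j, f (k, j) = ∑' n, ∑ p ∈ antidiagonal n, f p := by
  rw [← hf.tsum_prod' hf.prod_factor, ← HasAntidiagonal.sigmaAntidiagonalEquivProd.tsum_eq f]
  refine ((HasAntidiagonal.sigmaAntidiagonalEquivProd.summable_iff.mpr hf).tsum_sigma'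
    fun n => (hasSum_fintype _).summable).trans (tsum_congr fun n => ?_)
  exact (tsum_fintype _).trans (sum_finset_coe (fun p => f p) _)

section QNumbers

variable {q : ℝ}

lemma qNat_zero (q : ℝ) : qNat q 0 = 0 := by simp [qNat]

lemma qNat_add (q : ℝ) (k l : ℕ) : qNat q (k + l) = qNat q k + q ^ k * qNat q l := by
  simp only [qNat, pow_add]
  ring

lemma natCast_le_qNat (hq : 1 < q) (k : ℕ) : (k : ℝ) ≤ qNat q k := by
  rw [qNat, ← geom_sum_eq hq.ne']
  simpa using sum_le_sum fun i (_ : i ∈ range k) => one_le_pow₀ hq.le (n := i)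

lemma qNat_nonneg (hq : 1 < q) (k : ℕ) : 0 ≤ qNat q k :=
  k.cast_nonneg.trans (natCast_le_qNat hq k)

lemma qNat_pos (hq : 1 < q) {k : ℕ} (hk : 0 < k) : 0 < qNat q k :=
  (Nat.cast_pos.mpr hk).trans_le (natCast_le_qNat hq k)

lemma qNat_le (hq : 1 < q) (k : ℕ) : qNat q k ≤ q ^ k / (q - 1) :=
  div_le_div_of_nonneg_right (by linarith) (by linarith)

lemma factorial_le_qFactorial (hq : 1 < q) (k : ℕ) : (k ! : ℝ) ≤ qFactorial q k := by
  induction k with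
  | zero => simp [qFactorial]
  | succ k ih =>
    rw [factorial_succ, cast_mul, mul_comm, qFactorial]
    exact mul_le_mul ih (natCast_le_qNat hq _) (by positivity) (ih.trans' (by positivity))

lemma qFactorial_pos (hq : 1 < q) (k : ℕ) : 0 < qFactorial q k :=
  (Nat.cast_pos.mpr k.factorial_pos).trans_le (factorial_le_qFactorial hq k)

end QNumbers

lemma qStirling_zero_right (q : ℝ) {m : ℕ} (hm : m ≠ 0) : qStirling q m 0 = 0 := by
  obtain ⟨m, rfl⟩ := exists_eq_succ_of_ne_zero hm
  rfl

lemma qStirling_eq_zero_of_lt (q : ℝ) {m j : ℕ} (h : m < j) : qStirling q m j = 0 := by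
  induction m generalizing j with
  | zero => obtain ⟨j, rfl⟩ := exists_eq_succ_of_ne_zero h.ne'; rfl
  | succ m ih =>
    obtain ⟨j, rfl⟩ := exists_eq_succ_of_ne_zero (zero_lt_of_lt h).ne'
    simp only [qStirling, ih (by omega : m < j + 1), ih (by omega : m < j), mul_zero, add_zero]

section MomentCoefficients

variable {q : ℝ}

noncomputable def qMomentCoeff (q : ℝ) (k j : ℕ) : ℝ :=
  (-1) ^ j / (q ^ k.choose 2 * q ^ (k * j) * qFactorial q k * qFactorial q j)

lemma qMomentCoeff_zero_zero (q : ℝ) : qMomentCoeff q 0 0 = 1 := by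
  simp [qMomentCoeff, qFactorial]

lemma pow_mul_qNat_succ_mul_qMomentCoeff (hq : 1 < q) (k j : ℕ) :
    q ^ k * qNat q (j + 1) * qMomentCoeff q k (j + 1) = -qMomentCoeff q k j := by
  have := qFactorial_pos hq k
  have := qFactorial_pos hq j
  have := qNat_pos hq j.succ_pos
  have : q ≠ 0 := by positivity
  simp only [qMomentCoeff, qFactorial, mul_add, mul_one, pow_add, pow_succ]
  field_simp

lemma qNat_succ_mul_qMomentCoeff_succ (hq : 1 < q) (k j : ℕ) :
    qNat q (k + 1) * qMomentCoeff q (k + 1) j = qMomentCoeff q k j / q ^ (k + j) := by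
  have := qFactorial_pos hq k
  have := qFactorial_pos hq j
  have := qNat_pos hq k.succ_pos
  have : q ≠ 0 := by positivity
  simp only [qMomentCoeff, qFactorial, choose_succ_succ', choose_one_right, add_mul, one_mul,
    pow_add]
  field_simp

/-- Splitting `[N+1] = [k] + q^k [j]` for `k + j = N + 1`. -/
lemma sum_antidiagonal_succ_qNat_mul_qMomentCoeff_mul (hq : 1 < q) (g : ℕ → ℝ) (N : ℕ) :
    ∑ p ∈ antidiagonal (N + 1), qNat q p.1 * qMomentCoeff q p.1 p.2 * g p.1 =
      qNat q (N + 1) * ∑ p ∈ antidiagonal (N + 1), qMomentCoeff q p.1 p.2 * g p.1 +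
        ∑ p ∈ antidiagonal N, qMomentCoeff q p.1 p.2 * g p.1 := by
  have hsplit : ∀ p ∈ antidiagonal (N + 1), qNat q p.1 * qMomentCoeff q p.1 p.2 * g p.1 =
      qNat q (N + 1) * (qMomentCoeff q p.1 p.2 * g p.1) -
        q ^ p.1 * qNat q p.2 * qMomentCoeff q p.1 p.2 * g p.1 := by
    intro p hp
    rw [← mem_antidiagonal.mp hp, qNat_add]
    ring
  have hshift : ∑ p ∈ antidiagonal (N + 1), q ^ p.1 * qNat q p.2 * qMomentCoeff q p.1 p.2 * g p.1 =
      -∑ p ∈ antidiagonal N, qMomentCoeff q p.1 p.2 * g p.1 := by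
    rw [Nat.sum_antidiagonal_succ', qNat_zero, ← sum_neg_distrib]
    simp only [pow_mul_qNat_succ_mul_qMomentCoeff hq, mul_zero, zero_mul, zero_add, neg_mul]
  rw [sum_congr rfl hsplit, sum_sub_distrib, ← mul_sum, hshift, sub_neg_eq_add]

lemma sum_antidiagonal_succ_qNat_mul_qMomentCoeff (hq : 1 < q) (N : ℕ) :
    ∑ p ∈ antidiagonal (N + 1), qNat q p.1 * qMomentCoeff q p.1 p.2 =
      (∑ p ∈ antidiagonal N, qMomentCoeff q p.1 p.2) / q ^ N := by
  rw [Nat.sum_antidiagonal_succ, qNat_zero, zero_mul, zero_add, sum_div]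
  refine sum_congr rfl fun p hp => ?_
  rw [qNat_succ_mul_qMomentCoeff_succ hq, mem_antidiagonal.mp hp]

lemma sum_antidiagonal_qMomentCoeff (hq : 1 < q) (N : ℕ) :
    ∑ p ∈ antidiagonal N, qMomentCoeff q p.1 p.2 = qStirling q 0 N := by
  induction N with
  | zero => simp [qMomentCoeff_zero_zero, qStirling]
  | succ N ih =>
    have hrec := sum_antidiagonal_succ_qNat_mul_qMomentCoeff_mul hq (fun _ => 1) N
    simp only [mul_one] at hrec
    rw [sum_antidiagonal_succ_qNat_mul_qMomentCoeff hq, ih] at hrec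
    have hvanish : qStirling q 0 N / q ^ N = qStirling q 0 N := by
      cases N <;> simp [qStirling]
    have hzero : qNat q (N + 1) * ∑ p ∈ antidiagonal (N + 1), qMomentCoeff q p.1 p.2 = 0 := by
      linarith
    exact (mul_eq_zero.mp hzero).resolve_left (qNat_pos hq N.succ_pos).ne'

/-- The `q`-analogue of `S(m, N) = ∑_{k+j=N} (-1)^j k^m / (k! j!)`. -/
theorem sum_antidiagonal_qMomentCoeff_mul_qNat_pow (hq : 1 < q) (m N : ℕ) :
    ∑ p ∈ antidiagonal N, qMomentCoeff q p.1 p.2 * qNat q p.1 ^ m = qStirling q m N := by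
  induction m generalizing N with
  | zero => simpa using sum_antidiagonal_qMomentCoeff hq N
  | succ m ih =>
    cases N with
    | zero => simp [qNat_zero, qStirling]
    | succ N =>
      have hrec := sum_antidiagonal_succ_qNat_mul_qMomentCoeff_mul hq (qNat q · ^ m) N
      simp only [ih] at hrec
      rw [qStirling, ← hrec]
      refine sum_congr rfl fun p _ => by ring

end MomentCoefficients

section MomentSeries

variable {q : ℝ}

lemma abs_qMomentCoeff_le (hq : 1 < q) (k j : ℕ) : |qMomentCoeff q k j| ≤ 1 / (k ! * j !) := by
  have hk := factorial_le_qFactorial hq k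
  have hj := factorial_le_qFactorial hq j
  have := qFactorial_pos hq k
  have := qFactorial_pos hq j
  have h1 : 1 ≤ q ^ k.choose 2 := one_le_pow₀ hq.le
  have h2 : 1 ≤ q ^ (k * j) := one_le_pow₀ hq.le
  rw [qMomentCoeff, abs_div, abs_pow, abs_neg, abs_one, one_pow,
    abs_of_pos (by positivity)]
  apply one_div_le_one_div_of_le (by positivity)
  calc (k ! * j ! : ℝ) = 1 * 1 * k ! * j ! := by ring
    _ ≤ _ := by gcongr

lemma summable_qMomentCoeff_mul (hq : 1 < q) (m : ℕ) (z : ℝ) :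
    Summable fun p : ℕ × ℕ => qMomentCoeff q p.1 p.2 * qNat q p.1 ^ m * z ^ (p.1 + p.2) := by
  have hbound : ∀ p : ℕ × ℕ, ‖qMomentCoeff q p.1 p.2 * qNat q p.1 ^ m * z ^ (p.1 + p.2)‖ ≤
      ((q - 1)⁻¹ ^ m * ((q ^ m * |z|) ^ p.1 / p.1 !)) * (|z| ^ p.2 / p.2 !) := by
    rintro ⟨k, j⟩
    have hqk : qNat q k ≤ q ^ k * (q - 1)⁻¹ := qNat_le hq k
    rw [Real.norm_eq_abs, abs_mul, abs_mul, abs_pow, abs_pow, abs_of_nonneg (qNat_nonneg hq k)]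
    calc |qMomentCoeff q k j| * qNat q k ^ m * |z| ^ (k + j)
        ≤ 1 / (k ! * j !) * (q ^ k * (q - 1)⁻¹) ^ m * |z| ^ (k + j) := by
          have := qNat_nonneg hq k
          gcongr
          exact abs_qMomentCoeff_le hq k j
      _ = _ := by
          rw [mul_pow, mul_pow, pow_add, ← pow_mul, ← pow_mul, mul_comm k m]
          field_simp
  refine Summable.of_norm_bounded ?_ hbound
  exact ((Real.summable_pow_div_factorial _).mul_left _).mul_of_nonneg
    (Real.summable_pow_div_factorial _) (fun k => by positivity) (fun j => by positivity)

end MomentSeries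

/-- `s_{n,k}(q;x)` as a function of `y = [n]_q x`, through which alone it depends on `n`, `x`. -/
noncomputable def qSzaszKernel (q : ℝ) (k : ℕ) (y : ℝ) : ℝ :=
  (q ^ k.choose 2)⁻¹ * (y ^ k / qFactorial q k) * qExp q (-(q ^ k)⁻¹ * y)

lemma qSzaszBasis_eq_qSzaszKernel (q : ℝ) (n k : ℕ) (x : ℝ) :
    qSzaszBasis q n k x = qSzaszKernel q k (qNat q n * x) := by
  rw [qSzaszBasis, qSzaszKernel, choose_two_right, zpow_neg, zpow_natCast, mul_pow]
  ring_nf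

theorem tsum_qNat_pow_mul_qSzaszKernel {q : ℝ} (hq : 1 < q) (m : ℕ) (y : ℝ) :
    ∑' k, qNat q k ^ m * qSzaszKernel q k y = ∑ j ∈ range (m + 1), qStirling q m j * y ^ j := by
  have hexpand : ∀ k, qNat q k ^ m * qSzaszKernel q k y =
      ∑' j, qMomentCoeff q k j * qNat q k ^ m * y ^ (k + j) := by
    intro k
    rw [qSzaszKernel, qExp, ← mul_assoc, ← tsum_mul_left]
    refine tsum_congr fun j => ?_
    have := qFactorial_pos hq k
    have := qFactorial_pos hq j
    have : q ≠ 0 := by positivity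
    rw [qMomentCoeff, neg_mul, neg_pow, mul_pow, inv_pow, ← pow_mul, pow_add]
    field_simp
  calc ∑' k, qNat q k ^ m * qSzaszKernel q k y
      = ∑' k, ∑' j, qMomentCoeff q k j * qNat q k ^ m * y ^ (k + j) := tsum_congr hexpand
    _ = ∑' N, qStirling q m N * y ^ N := by
        rw [(summable_qMomentCoeff_mul hq m y).tsum_tsum_eq_tsum_sum_antidiagonal]
        refine tsum_congr fun N => ?_
        rw [← sum_antidiagonal_qMomentCoeff_mul_qNat_pow hq m N, sum_mul]
        exact sum_congr rfl fun p hp => by rw [mem_antidiagonal.mp hp]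
    _ = ∑ j ∈ range (m + 1), qStirling q m j * y ^ j :=
        tsum_eq_sum fun N hN => by
          rw [qStirling_eq_zero_of_lt q (by simpa using hN), zero_mul]

theorem qSzasz_moment_formula_general (q : ℝ) (hq : 1 < q) (n : ℕ) (hn : 1 ≤ n)
    (m : ℕ) (hm : 1 ≤ m) (x : ℝ) :
    qSzasz q n (fun t => t ^ m) x =
      ∑ j ∈ Finset.Icc 1 m, qStirling q m j * x ^ j / qNat q n ^ (m - j) := by
  have hn' : qNat q n ≠ 0 := (qNat_pos hq hn).ne'
  calc qSzasz q n (fun t => t ^ m) x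
      = (∑' k, qNat q k ^ m * qSzaszKernel q k (qNat q n * x)) / qNat q n ^ m := by
        rw [qSzasz, ← tsum_div_const]
        exact tsum_congr fun k => by rw [qSzaszBasis_eq_qSzaszKernel, div_pow]; ring
    _ = (∑ j ∈ range (m + 1), qStirling q m j * (qNat q n * x) ^ j) / qNat q n ^ m := by
        rw [tsum_qNat_pow_mul_qSzaszKernel hq]
    _ = ∑ j ∈ Icc 1 m, qStirling q m j * x ^ j / qNat q n ^ (m - j) := by
        rw [range_eq_Ico, sum_eq_sum_Ico_succ_bot (by omega), qStirling_zero_right q (by omega),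
          zero_mul, zero_add, sum_div]
        refine sum_congr rfl fun j hj => ?_
        rw [← pow_mul_pow_sub (qNat q n) (mem_Icc.mp hj).2, mul_pow]
        field_simp

/-- explicit representation of the moments via `q`-Stirling-type
numbers: `M_{n,q}(t^m;x) = ∑_{j=1}^m S_q(m,j) x^j/[n]_q^{m-j}`; in particular
`M_{n,q}(t^m;x)` is a polynomial of degree `m` in `x` without a constant term. -/
theorem qSzasz_moment_formula (q : ℝ) (hq : 1 < q) (n : ℕ) (hn : 1 ≤ n)
    (m : ℕ) (hm : 1 ≤ m) (x : ℝ) (hx : 0 ≤ x) :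
    qSzasz q n (fun t => t ^ m) x =
      ∑ j ∈ Finset.Icc 1 m, qStirling q m j * x ^ j / qNat q n ^ (m - j) :=
  qSzasz_moment_formula_general q hq n hn m hm x
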